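/- arXiv:2504.19945 — 5 statements merged into one kernel-verified Lean document; each statement's English description precedes it below -/
import Mathlib

section
/- (Uniqueness of the Mostow decomposition of SL(2,ℂ).) Let k, k' be 2×2 complex unitary matrices of determinant 1, let β, β' ∈ ℂ, and let t, t' ∈ ℝ. If k · exp(m_β) · !![Real.exp t, 0; 0, Real.exp (−t)] = k' · exp(m_{β'}) · !![Real.exp t', 0; 0, Real.exp (−t')], then k = k', β = β', and t = t'. -/
open Complex Matrix

lemma cross_term (β : ℂ) :
    β * (Real.sinh (‖β‖) : ℂ) / (‖β‖) *
      ((starRingEnd ℂ) β * (Real.sinh (‖β‖) : ℂ) / (‖β‖)) =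
    ((Real.sinh (‖β‖) ^ 2 : ℝ) : ℂ) := by
  by_cases hβ : β = 0
  · simp [hβ]
  · have hrpos : 0 < ‖β‖ := norm_pos_iff.mpr hβ
    have hr : ((‖β‖ : ℝ) : ℂ) ≠ 0 := by exact_mod_cast hrpos.ne'
    have hβr : (starRingEnd ℂ) β * β = ((‖β‖ : ℝ) : ℂ) * (‖β‖ : ℝ) := by
      rw [mul_comm, Complex.mul_conj]
      push_cast [← Complex.sq_norm]
      ring
    simp only [Complex.ofReal_sinh]
    field_simp
    linear_combination ((Complex.sinh ((‖β‖ : ℝ) : ℂ))^2) * hβr + ((‖β‖ : ℝ) : ℂ) ^ 2 * (by push_cast; ring : Complex.sinh ((‖β‖ : ℝ) : ℂ) ^ 2 = ((Real.sinh ‖β‖ ^ 2 : ℝ) : ℂ))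

noncomputable def Em (β : ℂ) : Matrix (Fin 2) (Fin 2) ℂ :=
  !![(Real.cosh (‖β‖) : ℂ),
      β * Real.sinh (‖β‖) / (‖β‖);
     (starRingEnd ℂ) β * Real.sinh (‖β‖) / (‖β‖),
      (Real.cosh (‖β‖) : ℂ)]

noncomputable def Dm (t : ℝ) : Matrix (Fin 2) (Fin 2) ℂ :=
  !![(Real.exp t : ℂ), 0; 0, (Real.exp (-t) : ℂ)]

lemma Em_herm (β : ℂ) : (Em β)ᴴ = Em β := by
  ext i j
  fin_cases i <;> fin_cases j <;>
    simp [Em, Matrix.conjTranspose_apply, map_div₀, ← Complex.cosh_conj, ← Complex.sinh_conj,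
      Complex.conj_ofReal]

lemma Dm_herm (t : ℝ) : (Dm t)ᴴ = Dm t := by
  ext i j
  fin_cases i <;> fin_cases j <;>
    simp [Dm, Matrix.conjTranspose_apply, ← Complex.exp_conj, Complex.conj_ofReal]

lemma Em_det (β : ℂ) : (Em β).det = 1 := by
  have hc := cross_term β
  push_cast at hc
  simp only [Em, Matrix.det_fin_two_of]
  push_cast
  linear_combination Complex.cosh_sq ((‖β‖ : ℝ) : ℂ) - hc

lemma Dm_det (t : ℝ) : (Dm t).det = 1 := by
  simp only [Dm, Matrix.det_fin_two_of, mul_zero, sub_zero, ← Complex.ofReal_mul,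
    ← Real.exp_add]
  norm_num

lemma prod_form (β : ℂ) (t : ℝ) :
    Dm t * (Em β * (Em β * Dm t)) =
    !![((Real.exp t ^ 2 * (Real.cosh (‖β‖) ^ 2 + Real.sinh (‖β‖) ^ 2) : ℝ) : ℂ),
        β * ((2 * Real.cosh (‖β‖) * Real.sinh (‖β‖) : ℝ) : ℂ) / (‖β‖);
       (starRingEnd ℂ) β * ((2 * Real.cosh (‖β‖) * Real.sinh (‖β‖) : ℝ) : ℂ) / (‖β‖),
        ((Real.exp (-t) ^ 2 * (Real.cosh (‖β‖) ^ 2 + Real.sinh (‖β‖) ^ 2) : ℝ) : ℂ)] := by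
  have hc := cross_term β
  push_cast at hc
  have hab : Complex.exp (t : ℂ) * Complex.exp (-(t : ℂ)) = 1 := by
    rw [← Complex.exp_add]
    simp
  ext i j
  fin_cases i <;> fin_cases j <;>
    simp [Em, Dm, Matrix.mul_apply, Fin.sum_univ_two] <;>
    push_cast <;>
    ring_nf
  · linear_combination (Complex.exp (t:ℂ))^2 * hc
  · linear_combination (β * Complex.cosh ((‖β‖ : ℝ) : ℂ) * Complex.sinh ((‖β‖ : ℝ) : ℂ) * 2 / (‖β‖)) * hab
  · linear_combination ((starRingEnd ℂ) β * Complex.cosh ((‖β‖ : ℝ) : ℂ) * Complex.sinh ((‖β‖ : ℝ) : ℂ) * 2 / (‖β‖)) * hab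
  · linear_combination (Complex.exp (-(t:ℂ)))^2 * hc

lemma exp_m (β : ℂ) :
    NormedSpace.exp (!![0, β; (starRingEnd ℂ) β, 0] : Matrix (Fin 2) (Fin 2) ℂ) =
    Em β := by
  unfold Em
  by_cases hβ : β = 0
  · subst hβ
    have h0 : (!![0, (0:ℂ); (starRingEnd ℂ) 0, 0] : Matrix (Fin 2) (Fin 2) ℂ) = 0 := by
      ext i j; fin_cases i <;> fin_cases j <;> simp
    rw [h0, NormedSpace.exp_zero]
    ext i j; fin_cases i <;> fin_cases j <;> simp [Matrix.one_apply]
  · set r : ℝ := ‖β‖ with hrdef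
    have hrpos : 0 < r := norm_pos_iff.mpr hβ
    have hr : (r:ℂ) ≠ 0 := by exact_mod_cast hrpos.ne'
    have hβr : (starRingEnd ℂ) β * β = (r:ℂ) * r := by
      rw [mul_comm, Complex.mul_conj]
      push_cast [← Complex.sq_norm]
      ring
    set P : Matrix (Fin 2) (Fin 2) ℂ := !![β, β; (r:ℂ), -r] with hP
    have hdet : P.det = -(2*β*r) := by simp [hP, Matrix.det_fin_two_of]; ring
    have hPu : IsUnit P.det := by
      rw [hdet]; exact (by simp [hβ, hr] : (-(2*β*(r:ℂ)) ≠ 0)).isUnit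
    have hPu' : IsUnit P := (Matrix.isUnit_iff_isUnit_det P).mpr hPu
    set Dg : Matrix (Fin 2) (Fin 2) ℂ := Matrix.diagonal ![(r:ℂ), -r] with hDg
    have key : (!![0, β; (starRingEnd ℂ) β, 0] : Matrix (Fin 2) (Fin 2) ℂ) * P = P * Dg := by
      ext i j; fin_cases i <;> fin_cases j <;>
        simp [hP, hDg, Matrix.mul_apply, Fin.sum_univ_two, Matrix.diagonal] <;> ring_nf <;>
        simp [hβr] <;> ring
    haveI : Invertible P := P.invertibleOfIsUnitDet hPu
    have key2 : (!![0, β; (starRingEnd ℂ) β, 0] : Matrix (Fin 2) (Fin 2) ℂ) = P * Dg * P⁻¹ := by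
      symm; rw [Matrix.mul_inv_eq_iff_eq_mul_of_invertible]; exact key.symm
    rw [key2, Matrix.exp_conj P Dg hPu', Matrix.exp_diagonal]
    have hexpD : NormedSpace.exp (![(r:ℂ), -r]) = ![(Real.exp r : ℂ), (Real.exp (-r) : ℂ)] := by
      rw [Pi.exp_def]
      ext i; fin_cases i <;>
        simp [← Complex.exp_eq_exp_ℂ, ← Complex.ofReal_exp, ← Complex.ofReal_neg]
    rw [hexpD]
    rw [Matrix.mul_inv_eq_iff_eq_mul_of_invertible]
    ext i j
    fin_cases i <;> fin_cases j <;>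
      simp [hP, Matrix.mul_apply, Fin.sum_univ_two, Matrix.diagonal] <;>
      field_simp <;> ring_nf
    · linear_combination (-1) * Complex.cosh_add_sinh ↑r
    · linear_combination (-1) * Complex.cosh_sub_sinh ↑r
    · linear_combination (-(↑r:ℂ)^2) * Complex.cosh_add_sinh ↑r + (-Complex.sinh ↑r) * hβr
    · linear_combination ((↑r:ℂ)^2) * Complex.cosh_sub_sinh ↑r + (-Complex.sinh ↑r) * hβr


/-- Uniqueness of the Mostow decomposition of `SL(2, ℂ)`:
if `k · exp(m_β) · diag(eᵗ, e⁻ᵗ) = k' · exp(m_β') · diag(eᵗ', e⁻ᵗ')` with `k, k'` unitary of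
determinant 1, then `k = k'`, `β = β'` and `t = t'`. -/
theorem mostow_decomposition_SL2_unique
    (k k' : Matrix (Fin 2) (Fin 2) ℂ)
    (hk : k ∈ Matrix.unitaryGroup (Fin 2) ℂ) (hkdet : k.det = 1)
    (hk' : k' ∈ Matrix.unitaryGroup (Fin 2) ℂ) (hk'det : k'.det = 1)
    (β β' : ℂ) (t t' : ℝ)
    (h : k * NormedSpace.exp (!![0, β; (starRingEnd ℂ) β, 0] : Matrix (Fin 2) (Fin 2) ℂ) *
          !![(Real.exp t : ℂ), 0; 0, (Real.exp (-t) : ℂ)] =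
        k' * NormedSpace.exp (!![0, β'; (starRingEnd ℂ) β', 0] : Matrix (Fin 2) (Fin 2) ℂ) *
          !![(Real.exp t' : ℂ), 0; 0, (Real.exp (-t') : ℂ)]) :
    k = k' ∧ β = β' ∧ t = t' := by
  rw [exp_m β, exp_m β',
    show (!![(Real.exp t : ℂ), 0; 0, (Real.exp (-t) : ℂ)]) = Dm t from rfl,
    show (!![(Real.exp t' : ℂ), 0; 0, (Real.exp (-t') : ℂ)]) = Dm t' from rfl] at h
  have hk1 : star k * k = 1 := Matrix.mem_unitaryGroup_iff'.mp hk
  have hk1' : star k' * k' = 1 := Matrix.mem_unitaryGroup_iff'.mp hk'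
  have haux : ∀ A : Matrix (Fin 2) (Fin 2) ℂ, kᴴ * (k * A) = A := by
    intro A
    rw [← Matrix.mul_assoc, ← Matrix.star_eq_conjTranspose, hk1, Matrix.one_mul]
  have haux' : ∀ A : Matrix (Fin 2) (Fin 2) ℂ, k'ᴴ * (k' * A) = A := by
    intro A
    rw [← Matrix.mul_assoc, ← Matrix.star_eq_conjTranspose, hk1', Matrix.one_mul]
  have h2 : Dm t * (Em β * (Em β * Dm t)) = Dm t' * (Em β' * (Em β' * Dm t')) := by
    have h3 := congrArg (fun M => Mᴴ * M) h
    simp only [Matrix.conjTranspose_mul, Matrix.mul_assoc] at h3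
    rw [haux, haux', Em_herm, Em_herm, Dm_herm, Dm_herm] at h3
    exact h3
  rw [prod_form, prod_form] at h2
  -- entry equations
  have e00 : ((Real.exp t ^ 2 * (Real.cosh (‖β‖) ^ 2 + Real.sinh (‖β‖) ^ 2) : ℝ) : ℂ)
      = ((Real.exp t' ^ 2 * (Real.cosh (‖β'‖) ^ 2 + Real.sinh (‖β'‖) ^ 2) : ℝ) : ℂ) := by
    simpa using congrFun (congrFun h2 0) 0
  have e11 : ((Real.exp (-t) ^ 2 * (Real.cosh (‖β‖) ^ 2 + Real.sinh (‖β‖) ^ 2) : ℝ) : ℂ)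
      = ((Real.exp (-t') ^ 2 * (Real.cosh (‖β'‖) ^ 2 + Real.sinh (‖β'‖) ^ 2) : ℝ) : ℂ) := by
    simpa using congrFun (congrFun h2 1) 1
  have e01 : β * ((2 * Real.cosh (‖β‖) * Real.sinh (‖β‖) : ℝ) : ℂ) / (‖β‖)
      = β' * ((2 * Real.cosh (‖β'‖) * Real.sinh (‖β'‖) : ℝ) : ℂ) / (‖β'‖) := by
    simpa using congrFun (congrFun h2 0) 1
  have E00 : Real.exp t ^ 2 * (Real.cosh (‖β‖) ^ 2 + Real.sinh (‖β‖) ^ 2)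
      = Real.exp t' ^ 2 * (Real.cosh (‖β'‖) ^ 2 + Real.sinh (‖β'‖) ^ 2) := by
    exact_mod_cast e00
  have E11 : Real.exp (-t) ^ 2 * (Real.cosh (‖β‖) ^ 2 + Real.sinh (‖β‖) ^ 2)
      = Real.exp (-t') ^ 2 * (Real.cosh (‖β'‖) ^ 2 + Real.sinh (‖β'‖) ^ 2) := by
    exact_mod_cast e11
  set r := ‖β‖ with hr
  set r' := ‖β'‖ with hr'
  clear_value r r'
  have hX1 : (1:ℝ) ≤ Real.cosh r ^ 2 + Real.sinh r ^ 2 := by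
    nlinarith [Real.one_le_cosh r, sq_nonneg (Real.sinh r)]
  have hX1' : (1:ℝ) ≤ Real.cosh r' ^ 2 + Real.sinh r' ^ 2 := by
    nlinarith [Real.one_le_cosh r', sq_nonneg (Real.sinh r')]
  have hab : Real.exp t * Real.exp (-t) = 1 := by rw [← Real.exp_add]; simp
  have hab' : Real.exp t' * Real.exp (-t') = 1 := by rw [← Real.exp_add]; simp
  have hmul : (Real.exp t ^ 2 * (Real.cosh r ^ 2 + Real.sinh r ^ 2)) *
      (Real.exp (-t) ^ 2 * (Real.cosh r ^ 2 + Real.sinh r ^ 2))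
      = (Real.exp t' ^ 2 * (Real.cosh r' ^ 2 + Real.sinh r' ^ 2)) *
      (Real.exp (-t') ^ 2 * (Real.cosh r' ^ 2 + Real.sinh r' ^ 2)) := by
    rw [E00, E11]
  have hXsq : (Real.cosh r ^ 2 + Real.sinh r ^ 2) ^ 2
      = (Real.cosh r' ^ 2 + Real.sinh r' ^ 2) ^ 2 := by
    calc (Real.cosh r ^ 2 + Real.sinh r ^ 2) ^ 2
        = (Real.exp t * Real.exp (-t)) ^ 2 * (Real.cosh r ^ 2 + Real.sinh r ^ 2) ^ 2 := by
          rw [hab]; ring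
      _ = (Real.exp t ^ 2 * (Real.cosh r ^ 2 + Real.sinh r ^ 2)) *
          (Real.exp (-t) ^ 2 * (Real.cosh r ^ 2 + Real.sinh r ^ 2)) := by ring
      _ = (Real.exp t' ^ 2 * (Real.cosh r' ^ 2 + Real.sinh r' ^ 2)) *
          (Real.exp (-t') ^ 2 * (Real.cosh r' ^ 2 + Real.sinh r' ^ 2)) := hmul
      _ = (Real.exp t' * Real.exp (-t')) ^ 2 * (Real.cosh r' ^ 2 + Real.sinh r' ^ 2) ^ 2 := by ring
      _ = (Real.cosh r' ^ 2 + Real.sinh r' ^ 2) ^ 2 := by rw [hab']; ring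
  have hX : Real.cosh r ^ 2 + Real.sinh r ^ 2 = Real.cosh r' ^ 2 + Real.sinh r' ^ 2 := by
    nlinarith [hX1, hX1', hXsq]
  have hs2 : Real.sinh r ^ 2 = Real.sinh r' ^ 2 := by
    linarith [Real.cosh_sq r, Real.cosh_sq r', hX]
  have hs : Real.sinh r = Real.sinh r' := by
    have h1 : 0 ≤ Real.sinh r := Real.sinh_nonneg_iff.mpr (hr.symm ▸ norm_nonneg β)
    have h2' : 0 ≤ Real.sinh r' := Real.sinh_nonneg_iff.mpr (hr'.symm ▸ norm_nonneg β')
    rw [← Real.sqrt_sq h1, ← Real.sqrt_sq h2', hs2]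
  have hrr : r = r' := Real.sinh_injective hs
  have ht : t = t' := by
    have hXpos : 0 < Real.cosh r ^ 2 + Real.sinh r ^ 2 := lt_of_lt_of_le one_pos hX1
    have ha2 : Real.exp t ^ 2 = Real.exp t' ^ 2 := by
      have := E00
      rw [← hX] at this
      exact mul_right_cancel₀ hXpos.ne' this
    have : Real.exp t = Real.exp t' := by
      rw [← Real.sqrt_sq (Real.exp_pos t).le, ← Real.sqrt_sq (Real.exp_pos t').le, ha2]
    exact Real.exp_injective this
  have hβ : β = β' := by
    by_cases h0 : r = 0
    · have hb0 : β = 0 := norm_eq_zero.mp (hr ▸ h0)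
      have h0' : r' = 0 := hrr ▸ h0
      rw [hr'] at h0'
      have hb0' : β' = 0 := norm_eq_zero.mp h0' 
      rw [hb0, hb0']
    · have hrpos : 0 < r := lt_of_le_of_ne (hr.symm ▸ norm_nonneg β) (Ne.symm h0)
      have hz : ((2 * Real.cosh r * Real.sinh r : ℝ) : ℂ) / (r : ℂ) ≠ 0 := by
        have hnum : (2 * Real.cosh r * Real.sinh r : ℝ) ≠ 0 := by
          have := Real.cosh_pos r
          have := Real.sinh_pos_iff.mpr hrpos
          positivity
        have hden : ((r : ℝ) : ℂ) ≠ 0 := by exact_mod_cast h0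
        exact div_ne_zero (by exact_mod_cast hnum) hden
      have e01' : β * (((2 * Real.cosh r * Real.sinh r : ℝ) : ℂ) / (r : ℂ))
          = β' * (((2 * Real.cosh r * Real.sinh r : ℝ) : ℂ) / (r : ℂ)) := by
        rw [← hrr] at e01
        linear_combination e01
      exact mul_right_cancel₀ hz e01'
  subst hβ
  have hdt : Dm t = Dm t' := by rw [ht]
  rw [← ht] at h
  have hDu : IsUnit (Dm t).det := by rw [Dm_det]; exact isUnit_one
  have hEu : IsUnit (Em β).det := by rw [Em_det]; exact isUnit_one
  have hDD : Dm t * (Dm t)⁻¹ = 1 := Matrix.mul_nonsing_inv _ hDu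
  have hEE : Em β * (Em β)⁻¹ = 1 := Matrix.mul_nonsing_inv _ hEu
  have h6 : k * Em β = k' * Em β := by
    have h7 := congrArg (fun M => M * (Dm t)⁻¹) h
    simpa [Matrix.mul_assoc, hDD] using h7
  have h8 : k = k' := by
    have h9 := congrArg (fun M => M * (Em β)⁻¹) h6
    simpa [Matrix.mul_assoc, hEE] using h9
  exact ⟨h8, rfl, ht⟩
end

section
/- Let x := !![Complex.I, 0; 0, −Complex.I]. For two matrices g = !![a, b; conj(b), conj(a)] and g' = !![a', b'; conj(b'), conj(a')] with |a|² − |b|² = 1 and |a'|² − |b'|² = 1, one has g·x·g⁻¹ = g'·x·g'⁻¹ if and only if b/conj(a) = b'/conj(a'). In other words, the adjoint orbit map of SU(1,1) through x factors through a bijection between SU(1,1)/U(1) and the orbit 𝒪ₓ^{n.c.}, where the class of g ∈ SU(1,1) is identified with the point b/conj(a) of the hyperbolic disc ℍ². -/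
open Complex Matrix

/-- For `x = diag(i, -i)` and `g, g' ∈ SU(1,1)`, one has `g·x·g⁻¹ = g'·x·g'⁻¹` if and only if
`b/conj a = b'/conj a'`: the adjoint orbit map of `SU(1,1)` through `x` factors through a
bijection between `SU(1,1)/U(1)` and the non-compact orbit, the class of `g` being identified
with the point `b/conj a` of the hyperbolic disc. -/
theorem adjoint_orbit_SU11_classes (a b a' b' : ℂ)
    (h : ‖a‖ ^ 2 - ‖b‖ ^ 2 = 1)
    (h' : ‖a'‖ ^ 2 - ‖b'‖ ^ 2 = 1) :
    let x : Matrix (Fin 2) (Fin 2) ℂ := !![Complex.I, 0; 0, -Complex.I]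
    let g : Matrix (Fin 2) (Fin 2) ℂ := !![a, b; (starRingEnd ℂ) b, (starRingEnd ℂ) a]
    let g' : Matrix (Fin 2) (Fin 2) ℂ := !![a', b'; (starRingEnd ℂ) b', (starRingEnd ℂ) a']
    g * x * g⁻¹ = g' * x * g'⁻¹ ↔ b / (starRingEnd ℂ) a = b' / (starRingEnd ℂ) a' := by
  intro x g g'
  have hc : a * (starRingEnd ℂ) a - b * (starRingEnd ℂ) b = 1 := by
    rw [Complex.mul_conj, Complex.mul_conj, ← Complex.ofReal_sub,
      ← Complex.sq_norm, ← Complex.sq_norm, h, Complex.ofReal_one]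
  have hc' : a' * (starRingEnd ℂ) a' - b' * (starRingEnd ℂ) b' = 1 := by
    rw [Complex.mul_conj, Complex.mul_conj, ← Complex.ofReal_sub,
      ← Complex.sq_norm, ← Complex.sq_norm, h', Complex.ofReal_one]
  have ha : a ≠ 0 := by
    intro h0; rw [h0] at h; simp at h
    nlinarith [sq_nonneg ‖b‖]
  have ha' : a' ≠ 0 := by
    intro h0; rw [h0] at h'; simp at h'
    nlinarith [sq_nonneg ‖b'‖]
  have hca : (starRingEnd ℂ) a ≠ 0 := by simpa using ha
  have hca' : (starRingEnd ℂ) a' ≠ 0 := by simpa using ha'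
  have hg : g * !![(starRingEnd ℂ) a, -b; -(starRingEnd ℂ) b, a] = 1 := by
    ext i j
    fin_cases i <;> fin_cases j <;>
      simp [g, Matrix.mul_apply, Fin.sum_univ_two] <;>
      first | ring1 | linear_combination hc
  have hg' : g' * !![(starRingEnd ℂ) a', -b'; -(starRingEnd ℂ) b', a'] = 1 := by
    ext i j
    fin_cases i <;> fin_cases j <;>
      simp [g', Matrix.mul_apply, Fin.sum_univ_two] <;>
      first | ring1 | linear_combination hc'
  rw [Matrix.inv_eq_right_inv hg, Matrix.inv_eq_right_inv hg']
  constructor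
  · intro hEq
    have e1 := congrFun (congrFun hEq 0) 0
    have e2 := congrFun (congrFun hEq 0) 1
    simp [g, g', x, Matrix.mul_apply, Fin.sum_univ_two] at e1 e2
    have haa : a * (starRingEnd ℂ) a = a' * (starRingEnd ℂ) a' := by
      linear_combination (-Complex.I/2) * e1 + hc/2 - hc'/2
        + ((a * (starRingEnd ℂ) a + b * (starRingEnd ℂ) b
            - a' * (starRingEnd ℂ) a' - b' * (starRingEnd ℂ) b')/2) * Complex.I_sq
    have key : a * (b * (starRingEnd ℂ) a' - b' * (starRingEnd ℂ) a) = 0 := by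
      linear_combination ((starRingEnd ℂ) a' * Complex.I / 2) * e2 - b' * haa
        + (a * b * (starRingEnd ℂ) a' - a' * b' * (starRingEnd ℂ) a') * Complex.I_sq
    rw [div_eq_div_iff hca hca']
    rcases mul_eq_zero.1 key with h0 | h0
    · exact absurd h0 ha
    · linear_combination h0
  · intro hdiv
    have hba : b * (starRingEnd ℂ) a' = b' * (starRingEnd ℂ) a :=
      (div_eq_div_iff hca hca').1 hdiv
    have hba2 : (starRingEnd ℂ) b * a' = (starRingEnd ℂ) b' * a := by
      have := congrArg (starRingEnd ℂ) hba
      simpa [_root_.map_mul] using this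
    have hbb : b * (starRingEnd ℂ) b = b' * (starRingEnd ℂ) b' := by
      linear_combination ((starRingEnd ℂ) b * a') * hba + (b' * (starRingEnd ℂ) a) * hba2
        - (b * (starRingEnd ℂ) b) * hc' + (b' * (starRingEnd ℂ) b') * hc
    have haa : a * (starRingEnd ℂ) a = a' * (starRingEnd ℂ) a' := by
      linear_combination hc - hc' + hbb
    have key : (a * b - a' * b') * (a' * (starRingEnd ℂ) a') = 0 := by
      linear_combination (a * a') * hba + (a' * b') * haa
    have e2 : a * b = a' * b' := by
      rcases mul_eq_zero.1 key with h0 | h0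
      · linear_combination h0
      · exact absurd h0 (mul_ne_zero ha' hca')
    have e2c : (starRingEnd ℂ) a * (starRingEnd ℂ) b
        = (starRingEnd ℂ) a' * (starRingEnd ℂ) b' := by
      have := congrArg (starRingEnd ℂ) e2
      simpa [_root_.map_mul] using this
    ext i j
    fin_cases i <;> fin_cases j <;>
      simp [g, g', x, Matrix.mul_apply, Fin.sum_univ_two]
    · linear_combination Complex.I * haa + Complex.I * hbb
    · linear_combination -2 * Complex.I * e2
    · linear_combination 2 * Complex.I * e2c
    · linear_combination -Complex.I * haa - Complex.I * hbb
end

section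
/- Let x := !![Complex.I, 0; 0, −Complex.I]. For every 2×2 complex matrix g of determinant 1, there exist a 2×2 complex unitary matrix k of determinant 1 and a complex number β such that g·x·g⁻¹ = (k·exp(m_β))·x·(k·exp(m_β))⁻¹. In other words, every point of the complex adjoint orbit 𝒪ₓ^ℂ lies in the SU(2)-orbit of a point of the fiber exp(i𝔪)·x·exp(i𝔪)⁻¹ over x. -/
set_option maxHeartbeats 1000000

open Complex Matrix

lemma diag2 (a b : ℂ) : (Matrix.diagonal ![a,b] : Matrix (Fin 2) (Fin 2) ℂ) = !![a,0;0,b] := by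
  ext i j
  fin_cases i <;> fin_cases j <;> simp [Matrix.diagonal]

lemma exp_m_s13 (r : ℝ) (u : ℂ) (hu : u * (starRingEnd ℂ) u = 1) :
    NormedSpace.exp (!![0, (r:ℂ)*u; (r:ℂ) * (starRingEnd ℂ) u, 0] : Matrix (Fin 2) (Fin 2) ℂ) =
      !![Complex.cosh r, u * Complex.sinh r; (starRingEnd ℂ) u * Complex.sinh r, Complex.cosh r] := by
  have hu0 : u ≠ 0 := by rintro rfl; simp at hu
  set U : Matrix (Fin 2) (Fin 2) ℂ := !![u, -u; 1, 1] with hU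
  have hdetU : U.det = 2 * u := by simp [hU, Matrix.det_fin_two_of]; ring
  have hUnit : IsUnit U := by
    rw [Matrix.isUnit_iff_isUnit_det, hdetU, isUnit_iff_ne_zero]
    exact mul_ne_zero two_ne_zero hu0
  have hUdet : IsUnit U.det := by rw [hdetU]; exact (isUnit_iff_ne_zero).2 (mul_ne_zero two_ne_zero hu0)
  have h1 : (!![0, (r:ℂ)*u; (r:ℂ) * (starRingEnd ℂ) u, 0] : Matrix (Fin 2) (Fin 2) ℂ)
      = U * Matrix.diagonal ![(r:ℂ), -(r:ℂ)] * U⁻¹ := by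
    have : Invertible U := U.invertibleOfIsUnitDet hUdet
    rw [eq_comm, Matrix.mul_inv_eq_iff_eq_mul_of_invertible, diag2]
    have : (starRingEnd ℂ) u = u⁻¹ := by
      field_simp at hu ⊢; linear_combination hu
    rw [this, hU]
    ext i j
    fin_cases i <;> fin_cases j <;> simp [Matrix.mul_apply, Fin.sum_univ_two] <;> field_simp <;> ring
  have : Invertible U := U.invertibleOfIsUnitDet hUdet
  rw [h1, Matrix.exp_conj U _ hUnit, Matrix.exp_diagonal]
  rw [Matrix.mul_inv_eq_iff_eq_mul_of_invertible]
  have hexp : NormedSpace.exp ![(r:ℂ), -(r:ℂ)] = ![Complex.exp r, Complex.exp (-r)] := by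
    funext i
    fin_cases i <;> simp [Pi.coe_exp, Complex.exp_eq_exp_ℂ]
  rw [hexp, diag2, hU]
  ext i j
  fin_cases i <;> fin_cases j <;>
    simp [Matrix.mul_apply, Fin.sum_univ_two, Complex.cosh, Complex.sinh] <;>
    first
      | ring1
      | linear_combination (Complex.exp (-(r:ℂ)) - Complex.exp (r:ℂ))/2 * hu
      | linear_combination (Complex.exp (-(r:ℂ)) - Complex.exp (r:ℂ)) * hu
      | linear_combination (3/2 : ℂ) * (Complex.exp (r:ℂ) - Complex.exp (-(r:ℂ))) * hu
      | linear_combination (Complex.exp (r:ℂ) - Complex.exp (-(r:ℂ)))/2 * hu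
      | linear_combination (Complex.exp (r:ℂ) - Complex.exp (-(r:ℂ))) * hu
      | linear_combination (3/2 : ℂ) * (Complex.exp (-(r:ℂ)) - Complex.exp (r:ℂ)) * hu

lemma key (A k : Matrix (Fin 2) (Fin 2) ℂ) (hk : k ∈ Matrix.unitaryGroup (Fin 2) ℂ)
    (hdk : k.det = 1) (htr : A.trace = 0) (hdet : A.det = 1) (lam : ℝ) (hlam : 0 ≤ lam)
    (hC : (A - Aᴴ) * k = k * !![Complex.I*lam, 0; 0, -(Complex.I*lam)]) :
    ∃ (β : ℂ),
      A = (k * NormedSpace.exp (!![0, β; (starRingEnd ℂ) β, 0] : Matrix (Fin 2) (Fin 2) ℂ)) *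
          !![Complex.I, 0; 0, -Complex.I] *
          (k * NormedSpace.exp (!![0, β; (starRingEnd ℂ) β, 0] : Matrix (Fin 2) (Fin 2) ℂ))⁻¹ := by
  have hkl : kᴴ * k = 1 := Matrix.mem_unitaryGroup_iff'.mp hk
  have hkr : k * kᴴ = 1 := Matrix.mem_unitaryGroup_iff.mp hk
  obtain ⟨B, hBdef⟩ : ∃ B : Matrix (Fin 2) (Fin 2) ℂ, B = kᴴ * A * k := ⟨_, rfl⟩
  have hAk : A * k = k * B := by
    rw [hBdef, ← Matrix.mul_assoc, ← Matrix.mul_assoc, hkr, Matrix.one_mul]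
  have htrB : B.trace = 0 := by
    rw [hBdef, Matrix.trace_mul_cycle, hkr, Matrix.one_mul, htr]
  have hdetB : B.det = 1 := by
    rw [hBdef, Matrix.det_mul, Matrix.det_mul, Matrix.det_conjTranspose, hdk, hdet]
    simp
  have hBH : Bᴴ = kᴴ * Aᴴ * k := by
    rw [hBdef]
    simp [Matrix.conjTranspose_mul, Matrix.mul_assoc]
  have hskew : B - Bᴴ = !![Complex.I*lam, 0; 0, -(Complex.I*lam)] := by
    rw [hBH, hBdef]
    have h2 : kᴴ * A * k - kᴴ * Aᴴ * k = kᴴ * ((A - Aᴴ) * k) := by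
      rw [Matrix.sub_mul, Matrix.mul_sub, ← Matrix.mul_assoc, ← Matrix.mul_assoc]
    rw [h2, hC, ← Matrix.mul_assoc, hkl, Matrix.one_mul]
  -- entry facts
  have e00 : B 0 0 - (starRingEnd ℂ) (B 0 0) = Complex.I * lam := by
    have h3 := congrFun (congrFun hskew 0) 0
    simpa [Matrix.conjTranspose_apply] using h3
  have e01 : B 0 1 = (starRingEnd ℂ) (B 1 0) := by
    have h3 := congrFun (congrFun hskew 0) 1
    simp [Matrix.conjTranspose_apply, sub_eq_zero] at h3
    exact h3
  have h11 : B 1 1 = -B 0 0 := by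
    rw [Matrix.trace_fin_two] at htrB
    linear_combination htrB
  have him : (B 0 0).im = lam/2 := by
    have h3 := congrArg Complex.im e00
    simp [Complex.sub_im, Complex.conj_im, Complex.mul_im] at h3
    linarith
  obtain ⟨N, hN⟩ : ∃ N : ℝ, N = Complex.normSq (B 1 0) := ⟨_, rfl⟩
  have hN0 : 0 ≤ N := hN ▸ Complex.normSq_nonneg _
  have h4 : ((N : ℝ) : ℂ) = (starRingEnd ℂ) (B 1 0) * (B 1 0) := by
    rw [hN]; exact Complex.normSq_eq_conj_mul_self
  have hsq : (B 0 0)^2 = -(1 + (N:ℂ)) := by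
    rw [Matrix.det_fin_two] at hdetB
    linear_combination -hdetB - (B 1 0) * e01 + (B 0 0) * h11 + h4
  have hri : (B 0 0).re * (B 0 0).im = 0 := by
    have h3 := congrArg Complex.im hsq
    simp [pow_two, Complex.mul_im] at h3
    linarith
  have hsqre : (B 0 0).re^2 - (B 0 0).im^2 = -(1 + N) := by
    have h3 := congrArg Complex.re hsq
    simp [pow_two, Complex.mul_re] at h3
    linear_combination h3
  have hre : (B 0 0).re = 0 := by
    rcases mul_eq_zero.mp hri with h | h
    · exact h
    · exfalso
      rw [h] at hsqre
      nlinarith [sq_nonneg (B 0 0).re]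
  obtain ⟨a, hadef⟩ : ∃ a : ℝ, a = lam/2 := ⟨_, rfl⟩
  have ha0 : 0 ≤ a := by rw [hadef]; positivity
  have hB00 : B 0 0 = Complex.I * (a:ℝ) := by
    apply Complex.ext <;> simp [Complex.mul_re, Complex.mul_im, hre, him, hadef]
  have ha2 : a^2 = 1 + N := by
    rw [hre, him] at hsqre
    rw [hadef]
    nlinarith
  obtain ⟨s, hsdef⟩ : ∃ s : ℝ, s = Real.sqrt N := ⟨_, rfl⟩
  have hs2 : s^2 = N := by rw [hsdef]; exact Real.sq_sqrt hN0
  have hs0 : 0 ≤ s := hsdef ▸ Real.sqrt_nonneg N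
  have hs2c : ((s:ℂ))^2 = ((N:ℝ):ℂ) := by exact_mod_cast congrArg (Complex.ofReal) hs2
  obtain ⟨u, hudef⟩ : ∃ u : ℂ,
      u = if B 1 0 = 0 then 1 else Complex.I * (starRingEnd ℂ) (B 1 0) / s := ⟨_, rfl⟩
  have hu : u * (starRingEnd ℂ) u = 1 := by
    rw [hudef]
    split_ifs with h
    · simp
    · have hNpos : 0 < N := by
        rw [hN]
        exact Complex.normSq_pos.mpr h
      have hspos : 0 < s := by rw [hsdef]; exact Real.sqrt_pos.mpr hNpos
      have hsne : (s:ℂ) ≠ 0 := by exact_mod_cast hspos.ne'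
      have h7 : Complex.I * (starRingEnd ℂ) (B 1 0) * (-Complex.I * (B 1 0))
          = (starRingEnd ℂ) (B 1 0) * (B 1 0) := by
        linear_combination (-(starRingEnd ℂ) (B 1 0) * (B 1 0)) * Complex.I_sq
      have h5 : (Complex.I * (starRingEnd ℂ) (B 1 0) / s) *
          (starRingEnd ℂ) (Complex.I * (starRingEnd ℂ) (B 1 0) / s)
          = ((starRingEnd ℂ) (B 1 0) * (B 1 0)) / ((s:ℂ)^2) := by
        rw [map_div₀, _root_.map_mul, Complex.conj_I, Complex.conj_conj, Complex.conj_ofReal,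
          div_mul_div_comm, h7, sq]
      rw [h5, ← h4, hs2c]
      exact div_self (Complex.ofReal_ne_zero.mpr hNpos.ne')
  have huw : u * (s:ℂ) = Complex.I * (starRingEnd ℂ) (B 1 0) := by
    rw [hudef]
    split_ifs with h
    · have hNz : N = 0 := by rw [hN, h]; simp
      have hsz : s = 0 := by rw [hsdef, hNz, Real.sqrt_zero]
      simp [h, hsz]
    · have hNpos : 0 < N := by
        rw [hN]
        exact Complex.normSq_pos.mpr h
      have hspos : 0 < s := by rw [hsdef]; exact Real.sqrt_pos.mpr hNpos
      have hsne : (s:ℂ) ≠ 0 := by exact_mod_cast hspos.ne'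
      field_simp
  obtain ⟨r, hrdef⟩ : ∃ r : ℝ, r = Real.arsinh s / 2 := ⟨_, rfl⟩
  have h2r : 2 * r = Real.arsinh s := by rw [hrdef]; ring
  have hsinh : Real.sinh (2*r) = s := by rw [h2r, Real.sinh_arsinh]
  have hcosh : Real.cosh (2*r) = a := by
    rw [h2r, Real.cosh_arsinh, show (1 + s^2) = a^2 by rw [hs2]; linarith]
    exact Real.sqrt_sq ha0
  obtain ⟨Cc, hCc⟩ : ∃ Cc : ℂ, Cc = Complex.cosh (r:ℂ) := ⟨_, rfl⟩
  obtain ⟨Sc, hSc⟩ : ∃ Sc : ℂ, Sc = Complex.sinh (r:ℂ) := ⟨_, rfl⟩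
  have f1 : ((a:ℝ):ℂ) = Cc ^ 2 + Sc ^ 2 := by
    rw [hCc, hSc, ← hcosh, Complex.ofReal_cosh]
    push_cast
    rw [Complex.cosh_two_mul]
  have f2 : ((s:ℝ):ℂ) = 2 * Sc * Cc := by
    rw [hCc, hSc, ← hsinh, Complex.ofReal_sinh]
    push_cast
    rw [Complex.sinh_two_mul]
  have f3 : Cc^2 - Sc^2 = 1 := by
    rw [hCc, hSc]; exact Complex.cosh_sq_sub_sinh_sq _
  have hcb : (starRingEnd ℂ) (B 1 0) = -Complex.I * (u * s) := by
    linear_combination Complex.I * huw + (starRingEnd ℂ) (B 1 0) * Complex.I_sq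
  have hB10 : B 1 0 = Complex.I * ((starRingEnd ℂ) u * s) := by
    have h6 := congrArg (starRingEnd ℂ) hcb
    simp only [Complex.conj_conj, _root_.map_mul, map_neg, Complex.conj_I,
      Complex.conj_ofReal] at h6
    rw [h6]
    ring
  obtain ⟨E, hEdef⟩ : ∃ E : Matrix (Fin 2) (Fin 2) ℂ,
      E = !![Cc, u * Sc; (starRingEnd ℂ) u * Sc, Cc] := ⟨_, rfl⟩
  have hE : NormedSpace.exp (!![0, (r:ℂ)*u; (r:ℂ) * (starRingEnd ℂ) u, 0]
      : Matrix (Fin 2) (Fin 2) ℂ) = E := by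
    rw [hEdef, hCc, hSc]
    exact exp_m_s13 r u hu
  have hBform : B = !![Complex.I*(a:ℝ), -(Complex.I*u*(s:ℝ));
      Complex.I*(starRingEnd ℂ) u*(s:ℝ), -(Complex.I*(a:ℝ))] := by
    ext i j
    fin_cases i <;> fin_cases j <;> simp only [Matrix.cons_val', Matrix.cons_val_zero,
      Matrix.cons_val_one, Matrix.head_cons, Matrix.empty_val', Matrix.cons_val_fin_one,
      Matrix.head_fin_const, Fin.isValue, Matrix.of_apply, Fin.zero_eta, Fin.mk_one]
    · exact hB00
    · rw [e01, hcb]; ring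
    · rw [hB10]; ring
    · rw [h11, hB00]
  have hBE : B * E = E * !![Complex.I, 0; 0, -Complex.I] := by
    rw [hBform, hEdef]
    ext i j
    fin_cases i <;> fin_cases j <;>
      simp only [Matrix.mul_apply, Fin.sum_univ_two, Matrix.cons_val', Matrix.cons_val_zero,
        Matrix.cons_val_one, Matrix.head_cons, Matrix.empty_val', Matrix.cons_val_fin_one,
        Matrix.head_fin_const, Fin.isValue, Matrix.of_apply, Fin.zero_eta, Fin.mk_one]
    · linear_combination (Complex.I*Cc)*f1 + (-(Complex.I*Sc))*f2 +
        (-(Complex.I*(s:ℂ)*Sc))*hu + (Complex.I*Cc)*f3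
    · linear_combination (Complex.I*u*Sc)*f1 + (-(Complex.I*u*Cc))*f2 + (-(Complex.I*u*Sc))*f3
    · linear_combination (-(Complex.I*((starRingEnd ℂ) u)*Sc))*f1 +
        (Complex.I*((starRingEnd ℂ) u)*Cc)*f2 + (Complex.I*((starRingEnd ℂ) u)*Sc)*f3
    · linear_combination (Complex.I*(s:ℂ)*Sc)*hu + (Complex.I*Sc)*f2 +
        (-(Complex.I*Cc))*f1 + (-(Complex.I*Cc))*f3
  have hdetE : E.det = 1 := by
    rw [hEdef, Matrix.det_fin_two_of]
    linear_combination f3 - Sc^2*hu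
  refine ⟨(r:ℂ)*u, ?_⟩
  have hmat : (!![0, (r:ℂ)*u; (starRingEnd ℂ) ((r:ℂ)*u), 0] : Matrix (Fin 2) (Fin 2) ℂ)
      = !![0, (r:ℂ)*u; (r:ℂ)*(starRingEnd ℂ) u, 0] := by
    rw [_root_.map_mul, Complex.conj_ofReal]
  rw [hmat, hE]
  have hdetK : IsUnit (k * E).det := by
    rw [Matrix.det_mul, hdk, hdetE, mul_one]
    exact isUnit_one
  haveI := (k * E).invertibleOfIsUnitDet hdetK
  symm
  rw [Matrix.mul_inv_eq_iff_eq_mul_of_invertible]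
  have hfin : A * (k * E) = k * E * !![Complex.I, 0; 0, -Complex.I] := by
    rw [← Matrix.mul_assoc, hAk, Matrix.mul_assoc, hBE, ← Matrix.mul_assoc]
  rw [hfin]

lemma key2 (A : Matrix (Fin 2) (Fin 2) ℂ) (htr : A.trace = 0) (hdet : A.det = 1) :
    ∃ (k : Matrix (Fin 2) (Fin 2) ℂ) (β : ℂ),
      k ∈ Matrix.unitaryGroup (Fin 2) ℂ ∧ k.det = 1 ∧
      A = (k * NormedSpace.exp (!![0, β; (starRingEnd ℂ) β, 0] : Matrix (Fin 2) (Fin 2) ℂ)) *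
          !![Complex.I, 0; 0, -Complex.I] *
          (k * NormedSpace.exp (!![0, β; (starRingEnd ℂ) β, 0] : Matrix (Fin 2) (Fin 2) ℂ))⁻¹ := by
  have h11 : A 1 1 = -A 0 0 := by
    rw [Matrix.trace_fin_two] at htr
    linear_combination htr
  obtain ⟨c, hcdef⟩ : ∃ c : ℝ, c = 2 * (A 0 0).im := ⟨_, rfl⟩
  obtain ⟨γ, hγdef⟩ : ∃ γ : ℂ, γ = Complex.I * ((starRingEnd ℂ) (A 1 0) - A 0 1) := ⟨_, rfl⟩
  have hAA : A - Aᴴ = !![Complex.I*(c:ℝ), Complex.I*γ;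
      Complex.I*(starRingEnd ℂ) γ, -(Complex.I*(c:ℝ))] := by
    have hsc := Complex.sub_conj (A 0 0)
    push_cast at hsc
    ext i j
    fin_cases i <;> fin_cases j <;> simp only [Matrix.sub_apply, Matrix.conjTranspose_apply,
      Complex.star_def, Matrix.cons_val', Matrix.cons_val_zero, Matrix.cons_val_one,
      Matrix.head_cons, Matrix.empty_val', Matrix.cons_val_fin_one, Matrix.head_fin_const,
      Fin.isValue, Matrix.of_apply, Fin.zero_eta, Fin.mk_one]
    · rw [hcdef]
      push_cast
      linear_combination hsc
    · rw [hγdef]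
      linear_combination (A 0 1 - (starRingEnd ℂ) (A 1 0)) * Complex.I_sq
    · rw [hγdef]
      simp only [_root_.map_mul, Complex.conj_I, map_sub, Complex.conj_conj]
      linear_combination (A 1 0 - (starRingEnd ℂ) (A 0 1)) * Complex.I_sq
    · rw [h11, map_neg, hcdef]
      push_cast
      linear_combination -hsc
  by_cases hγ0 : γ = 0
  · by_cases hc : 0 ≤ c
    · have hC : (A - Aᴴ) * (1 : Matrix (Fin 2) (Fin 2) ℂ)
          = 1 * !![Complex.I*(c:ℝ), 0; 0, -(Complex.I*(c:ℝ))] := by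
        rw [Matrix.mul_one, Matrix.one_mul, hAA, hγ0]
        simp
      obtain ⟨β, hβ⟩ := key A 1 (one_mem _) Matrix.det_one htr hdet c hc hC
      exact ⟨1, β, one_mem _, Matrix.det_one, hβ⟩
    · obtain ⟨k, hkdef⟩ : ∃ k : Matrix (Fin 2) (Fin 2) ℂ, k = !![0, -1; 1, 0] := ⟨_, rfl⟩
      have hk : k ∈ Matrix.unitaryGroup (Fin 2) ℂ := by
        rw [Matrix.mem_unitaryGroup_iff, hkdef]
        ext i j
        fin_cases i <;> fin_cases j <;>
          simp [Matrix.mul_apply, Fin.sum_univ_two, Matrix.conjTranspose_apply,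
            Matrix.one_apply]
      have hdk : k.det = 1 := by simp [hkdef, Matrix.det_fin_two_of]
      have hC : (A - Aᴴ) * k = k * !![Complex.I*((-c : ℝ):ℝ), 0; 0, -(Complex.I*((-c:ℝ):ℝ))] := by
        rw [hAA, hγ0, hkdef]
        ext i j
        fin_cases i <;> fin_cases j <;>
          simp [Matrix.mul_apply, Fin.sum_univ_two] <;> push_cast <;> ring
      obtain ⟨β, hβ⟩ := key A k hk hdk htr hdet (-c) (by linarith) hC
      exact ⟨k, β, hk, hdk, hβ⟩
  · obtain ⟨lam, hlamdef⟩ : ∃ lam : ℝ, lam = Real.sqrt (c^2 + Complex.normSq γ) := ⟨_, rfl⟩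
    have hnγ : 0 < Complex.normSq γ := Complex.normSq_pos.mpr hγ0
    have hlam0 : 0 ≤ lam := hlamdef ▸ Real.sqrt_nonneg _
    have hlam2 : lam^2 = c^2 + Complex.normSq γ := by
      rw [hlamdef]; exact Real.sq_sqrt (by positivity)
    have hclam : c < lam := by
      nlinarith [abs_nonneg c, _root_.sq_abs c, le_abs_self c]
    obtain ⟨n, hndef⟩ : ∃ n : ℝ, n = Real.sqrt (2*lam*(lam - c)) := ⟨_, rfl⟩
    have hlampos : 0 < lam := by nlinarith
    have hn2 : n^2 = 2*lam*(lam - c) := by rw [hndef]; exact Real.sq_sqrt (by nlinarith)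
    have hnpos : 0 < n := by rw [hndef]; exact Real.sqrt_pos.mpr (by nlinarith)
    have hnne : ((n:ℝ):ℂ) ≠ 0 := Complex.ofReal_ne_zero.mpr hnpos.ne'
    have hγn : ((Complex.normSq γ : ℝ):ℂ) = (starRingEnd ℂ) γ * γ :=
      Complex.normSq_eq_conj_mul_self
    have hlam2c : ((lam:ℝ):ℂ)^2 = ((c:ℝ):ℂ)^2 + (starRingEnd ℂ) γ * γ := by
      rw [← hγn]
      exact_mod_cast congrArg (Complex.ofReal) hlam2
    have hn2c : ((n:ℝ):ℂ)^2 = 2*((lam:ℝ):ℂ)*(((lam:ℝ):ℂ) - ((c:ℝ):ℂ)) := by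
      exact_mod_cast congrArg (Complex.ofReal) hn2
    obtain ⟨k, hkdef⟩ : ∃ k : Matrix (Fin 2) (Fin 2) ℂ, k = !![γ/n, -(((lam - c : ℝ):ℂ))/n;
        (((lam - c : ℝ):ℂ))/n, (starRingEnd ℂ) γ/n] := ⟨_, rfl⟩
    have hk : k ∈ Matrix.unitaryGroup (Fin 2) ℂ := by
      rw [Matrix.mem_unitaryGroup_iff, hkdef]
      ext i j
      fin_cases i <;> fin_cases j <;>
        simp only [Matrix.mul_apply, Fin.sum_univ_two, Matrix.conjTranspose_apply,
          Matrix.cons_val', Matrix.cons_val_zero, Matrix.cons_val_one, Matrix.head_cons,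
          Matrix.empty_val', Matrix.cons_val_fin_one, Matrix.head_fin_const, Fin.isValue,
          Matrix.of_apply, Fin.zero_eta, Fin.mk_one, map_div₀, map_neg, Complex.conj_conj,
          Complex.conj_ofReal, Matrix.one_apply_eq, Matrix.one_apply_ne, ne_eq, Complex.star_def,
            Matrix.star_apply, Matrix.one_apply, Fin.mk.injEq, zero_ne_one, one_ne_zero, if_false, if_true] <;>
        push_cast <;>
        field_simp <;>
        first
          | ring1
          | linear_combination hlam2c + hn2c
          | linear_combination -hlam2c - hn2c
          | linear_combination hlam2c - hn2c
          | linear_combination -hlam2c + hn2c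
          | linear_combination 2*hlam2c - hn2c
          | linear_combination hn2c - 2*hlam2c
    have hdk : k.det = 1 := by
      rw [hkdef, Matrix.det_fin_two_of]
      push_cast
      field_simp
      first
        | ring1
        | linear_combination hlam2c + hn2c
        | linear_combination -hlam2c - hn2c
        | linear_combination hlam2c - hn2c
        | linear_combination -hlam2c + hn2c
        | linear_combination 2*hlam2c - hn2c
        | linear_combination hn2c - 2*hlam2c
    have hC : (A - Aᴴ) * k = k * !![Complex.I*lam, 0; 0, -(Complex.I*lam)] := by
      rw [hAA, hkdef]
      ext i j
      fin_cases i <;> fin_cases j <;>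
        simp only [Matrix.mul_apply, Fin.sum_univ_two, Matrix.cons_val', Matrix.cons_val_zero,
          Matrix.cons_val_one, Matrix.head_cons, Matrix.empty_val', Matrix.cons_val_fin_one,
          Matrix.head_fin_const, Fin.isValue, Matrix.of_apply, Fin.zero_eta, Fin.mk_one] <;>
        push_cast <;>
        field_simp <;>
        first
          | ring1
          | linear_combination Complex.I * hlam2c
          | linear_combination -Complex.I * hlam2c
          | linear_combination Complex.I * hn2c
          | linear_combination -Complex.I * hn2c
    obtain ⟨β, hβ⟩ := key A k hk hdk htr hdet lam hlam0 hC
    exact ⟨k, β, hk, hdk, hβ⟩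


/-- For `x = diag(i, -i)`, every point `g·x·g⁻¹` of the complex adjoint orbit
(`g ∈ SL(2, ℂ)`) lies in the `SU(2)`-orbit of a point of the fiber `exp(i𝔪)·x·exp(i𝔪)⁻¹`:
there exist `k ∈ SU(2)` and `β ∈ ℂ` with `g·x·g⁻¹ = (k·exp(m_β))·x·(k·exp(m_β))⁻¹`. -/
theorem complex_orbit_from_fiber (g : Matrix (Fin 2) (Fin 2) ℂ) (hg : g.det = 1) :
    let x : Matrix (Fin 2) (Fin 2) ℂ := !![Complex.I, 0; 0, -Complex.I]
    ∃ (k : Matrix (Fin 2) (Fin 2) ℂ) (β : ℂ),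
      k ∈ Matrix.unitaryGroup (Fin 2) ℂ ∧ k.det = 1 ∧
      g * x * g⁻¹ =
        (k * NormedSpace.exp (!![0, β; (starRingEnd ℂ) β, 0] : Matrix (Fin 2) (Fin 2) ℂ)) * x *
          (k * NormedSpace.exp (!![0, β; (starRingEnd ℂ) β, 0] : Matrix (Fin 2) (Fin 2) ℂ))⁻¹ := by
  intro x
  have hdetg : IsUnit g.det := by rw [hg]; exact isUnit_one
  have htr : (g * x * g⁻¹).trace = 0 := by
    rw [Matrix.trace_mul_cycle, Matrix.nonsing_inv_mul g hdetg, Matrix.one_mul,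
      Matrix.trace_fin_two]
    simp [x]
  have hdet : (g * x * g⁻¹).det = 1 := by
    rw [Matrix.det_mul, Matrix.det_mul, Matrix.det_nonsing_inv, hg]
    simp [x, Matrix.det_fin_two_of]
  obtain ⟨k, β, hk, hdk, hβ⟩ := key2 (g * x * g⁻¹) htr hdet
  exact ⟨k, β, hk, hdk, hβ⟩
end

section
/- Let β be a nonzero complex number and set Z := (β/|β|)·tanh|β|. The function c₁ : ℝ → ℂ defined by c₁(t) = ((β/|β|)·cosh t·sinh|β| + Complex.I·sinh t·cosh|β|) / (−Complex.I·(β/|β|)·sinh t·sinh|β| + cosh t·cosh|β|) has derivative Complex.I·(1 + Z²) at t = 0. -/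
open Complex

/-- For nonzero `β : ℂ` and `Z := (β/|β|)·tanh |β|`, the curve
`t ↦ ((β/|β|)·cosh t·sinh |β| + i·sinh t·cosh |β|) / (-i·(β/|β|)·sinh t·sinh |β| + cosh t·cosh |β|)`
has derivative `i·(1 + Z²)` at `t = 0`. -/
theorem tangent_vector_X1 (β : ℂ) (hβ : β ≠ 0) :
    let Z : ℂ := (β / (‖β‖ : ℂ)) * (Real.tanh (‖β‖) : ℂ)
    HasDerivAt (fun t : ℝ =>
        ((β / (‖β‖ : ℂ)) * (Real.cosh t : ℂ) * (Real.sinh (‖β‖) : ℂ) +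
            Complex.I * (Real.sinh t : ℂ) * (Real.cosh (‖β‖) : ℂ)) /
          (-Complex.I * (β / (‖β‖ : ℂ)) * (Real.sinh t : ℂ) *
              (Real.sinh (‖β‖) : ℂ) +
            (Real.cosh t : ℂ) * (Real.cosh (‖β‖) : ℂ)))
      (Complex.I * (1 + Z ^ 2)) 0 := by
  intro Z
  set u : ℂ := β / (‖β‖ : ℂ) with hu
  set s : ℂ := (Real.sinh (‖β‖) : ℂ) with hs
  set c : ℂ := (Real.cosh (‖β‖) : ℂ) with hc
  have hcosh : HasDerivAt (fun t : ℝ => ((Real.cosh t : ℂ))) ((Real.sinh 0 : ℂ)) 0 :=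
    (Real.hasDerivAt_cosh 0).ofReal_comp
  have hsinh : HasDerivAt (fun t : ℝ => ((Real.sinh t : ℂ))) ((Real.cosh 0 : ℂ)) 0 :=
    (Real.hasDerivAt_sinh 0).ofReal_comp
  have hN : HasDerivAt (fun t : ℝ => u * (Real.cosh t : ℂ) * s + Complex.I * (Real.sinh t : ℂ) * c)
      (u * (Real.sinh 0 : ℂ) * s + Complex.I * (Real.cosh 0 : ℂ) * c) 0 :=
    (((hcosh.const_mul u).mul_const s)).add ((hsinh.const_mul Complex.I).mul_const c)
  have hD : HasDerivAt (fun t : ℝ => -Complex.I * u * (Real.sinh t : ℂ) * s + (Real.cosh t : ℂ) * c)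
      (-Complex.I * u * (Real.cosh 0 : ℂ) * s + (Real.sinh 0 : ℂ) * c) 0 :=
    (((hsinh.const_mul (-Complex.I * u)).mul_const s)).add (hcosh.mul_const c)
  have hc0 : c ≠ 0 := by
    simp only [hc, Ne, Complex.ofReal_eq_zero]
    exact (Real.cosh_pos (‖β‖)).ne'
  have hD0 : (-Complex.I * u * (Real.sinh (0:ℝ) : ℂ) * s + (Real.cosh (0:ℝ) : ℂ) * c) ≠ 0 := by
    simp [Real.sinh_zero, Real.cosh_zero, hc0]
  have h := hN.div hD hD0
  convert h using 1
  case e'_4 => rfl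
  case e'_8 => rfl
  have hcs : c ^ 2 - s ^ 2 = 1 := by
    have := Real.cosh_sq_sub_sinh_sq (‖β‖)
    simp only [hc, hs]
    push_cast
    exact_mod_cast this
  have htanh : (Real.tanh (‖β‖) : ℂ) = s / c := by
    rw [Real.tanh_eq_sinh_div_cosh]
    push_cast [hs, hc]
    ring
  simp only [Z, htanh, Real.sinh_zero, Real.cosh_zero]
  have habs : ((‖β‖ : ℝ) : ℂ) ≠ 0 := by
    simpa using (norm_ne_zero_iff.mpr hβ)
  push_cast
  field_simp
  have h1 : ((‖β‖ : ℝ) : ℂ) ^ 2 * (((‖β‖ : ℝ) : ℂ))⁻¹ ^ 2 = 1 := by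
    rw [← mul_pow, mul_inv_cancel₀ habs, one_pow]
  have h2 : c ^ 2 * c⁻¹ ^ 2 = 1 := by
    rw [← mul_pow, mul_inv_cancel₀ hc0, one_pow]
  linear_combination (-(Complex.I * β ^ 2 * s ^ 2)) * h1 + (-(Complex.I * ((‖β‖ : ℝ) : ℂ) ^ 2 * c ^ 2) - Complex.I * β ^ 2 * s ^ 2 * (((‖β‖ : ℝ) : ℂ) ^ 2 * (((‖β‖ : ℝ) : ℂ))⁻¹ ^ 2)) * h2
end

section
/- (The embedding of ℍ² into the hyperkähler extension of ℂP¹ is not holomorphic.) For every complex number Z with |Z| < 1, let J_Z : ℂ → ℂ be the unique ℝ-linear map satisfying J_Z(Complex.I·(1 + Z²)) = 1 − Z² and J_Z(1 − Z²) = −Complex.I·(1 + Z²). Then J_Z ∘ J_Z = −id, and J_Z equals the ℝ-linear map of multiplication by −Complex.I if and only if Z = 0; moreover, for Z ≠ 0, J_Z is not multiplication by Complex.I either. In particular, for Z ≠ 0 the complex structure induced on ℍ² by the complex structure I₂ of the hyperkähler coadjoint orbit differs from the complex structure of ℍ² inherited from its embedding in ℂ. -/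
open Complex

noncomputable def conjL : ℂ →ₗ[ℝ] ℂ := Complex.conjLIE.toLinearEquiv.toLinearMap

noncomputable def Jmap (Z : ℂ) : ℂ →ₗ[ℝ] ℂ :=
  (-Complex.I * (1 + Z^2 * (starRingEnd ℂ Z)^2) / (1 - Z^2 * (starRingEnd ℂ Z)^2)) • (LinearMap.id : ℂ →ₗ[ℝ] ℂ)
  + (-2*Complex.I*Z^2 / (1 - Z^2 * (starRingEnd ℂ Z)^2)) • conjL

theorem Jmap_apply (Z w : ℂ) : Jmap Z w =
    (-Complex.I * (1 + Z^2 * (starRingEnd ℂ Z)^2) / (1 - Z^2 * (starRingEnd ℂ Z)^2)) * w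
    + (-2*Complex.I*Z^2 / (1 - Z^2 * (starRingEnd ℂ Z)^2)) * (starRingEnd ℂ w) := rfl

theorem auxIcube : Complex.I ^ 3 = -Complex.I := by
  rw [pow_succ, Complex.I_sq]; ring

theorem auxIfour : Complex.I ^ 4 = 1 := by
  rw [show (4:ℕ) = 2*2 from rfl, pow_mul, Complex.I_sq]; ring

/-- The embedding of `ℍ²` into the hyperkähler extension of `ℂP¹` is not holomorphic:
for `|Z| < 1` there is a unique `ℝ`-linear map `J_Z : ℂ → ℂ` with
`J_Z(i·(1 + Z²)) = 1 - Z²` and `J_Z(1 - Z²) = -i·(1 + Z²)`; it satisfies `J_Z ∘ J_Z = -id`,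
it is multiplication by `-i` if and only if `Z = 0`, and for `Z ≠ 0` it is not multiplication
by `i` either. -/
theorem induced_complex_structure_differs (Z : ℂ) (hZ : ‖Z‖ < 1) :
    (∃! J : ℂ →ₗ[ℝ] ℂ,
        J (Complex.I * (1 + Z ^ 2)) = 1 - Z ^ 2 ∧
        J (1 - Z ^ 2) = -(Complex.I * (1 + Z ^ 2))) ∧
    ∀ J : ℂ →ₗ[ℝ] ℂ,
      J (Complex.I * (1 + Z ^ 2)) = 1 - Z ^ 2 →
      J (1 - Z ^ 2) = -(Complex.I * (1 + Z ^ 2)) →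
      (∀ w : ℂ, J (J w) = -w) ∧
      ((∀ w : ℂ, J w = -Complex.I * w) ↔ Z = 0) ∧
      (Z ≠ 0 → ¬ ∀ w : ℂ, J w = Complex.I * w) := by
  have hD : (1 : ℂ) - Z^2 * (starRingEnd ℂ Z)^2 ≠ 0 := by
    have h1 : Complex.normSq Z < 1 := by
      have := Complex.sq_norm Z
      nlinarith [norm_nonneg Z]
    have h2 : (1 : ℂ) - Z^2 * (starRingEnd ℂ Z)^2 = ((1 - Complex.normSq Z ^ 2 : ℝ) : ℂ) := by
      push_cast
      rw [show Z^2 * (starRingEnd ℂ Z)^2 = (Z * starRingEnd ℂ Z)^2 by ring, Complex.mul_conj]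
    rw [h2]
    have : (0:ℝ) ≤ Complex.normSq Z := Complex.normSq_nonneg Z
    simp only [ne_eq, Complex.ofReal_eq_zero]
    nlinarith
  have he1 : Jmap Z (Complex.I * (1 + Z ^ 2)) = 1 - Z ^ 2 := by
    rw [Jmap_apply]
    simp only [map_mul, map_add, map_one, map_pow, Complex.conj_I]
    field_simp
    ring_nf
    try simp only [Complex.I_sq, auxIcube, auxIfour]
    try ring
  have he2 : Jmap Z (1 - Z ^ 2) = -(Complex.I * (1 + Z ^ 2)) := by
    rw [Jmap_apply]
    simp only [map_sub, map_one, map_pow]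
    field_simp
    ring_nf
    try simp only [Complex.I_sq, auxIcube, auxIfour]
    try ring
  -- uniqueness: any J with the two conditions equals Jmap Z
  have key : ∀ J : ℂ →ₗ[ℝ] ℂ,
      J (Complex.I * (1 + Z ^ 2)) = 1 - Z ^ 2 →
      J (1 - Z ^ 2) = -(Complex.I * (1 + Z ^ 2)) → J = Jmap Z := by
    intro J h1 h2
    obtain ⟨p, hp⟩ : ∃ p : ℝ, p = (Z^2).re := ⟨_, rfl⟩
    obtain ⟨q, hq⟩ : ∃ q : ℝ, q = (Z^2).im := ⟨_, rfl⟩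
    have hpq : p^2 + q^2 < 1 := by
      have ha1 : ‖Z^2‖ < 1 := by
        rw [norm_pow]; exact pow_lt_one₀ (norm_nonneg Z) hZ (by norm_num)
      have ha2 := Complex.sq_norm (Z^2)
      rw [Complex.normSq_apply, ← hp, ← hq] at ha2
      nlinarith [norm_nonneg (Z^2)]
    have hDr : (1 : ℝ) - (p^2 + q^2) ≠ 0 := by nlinarith
    have hone : (1:ℂ) = (q/(1-(p^2+q^2))) • (Complex.I*(1+Z^2))
        + ((1+p)/(1-(p^2+q^2))) • (1-Z^2) := by
      rw [Complex.real_smul, Complex.real_smul, Complex.ext_iff]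
      constructor <;>
      · simp only [Complex.add_re, Complex.mul_re, Complex.mul_im, Complex.sub_re,
          Complex.sub_im, Complex.ofReal_re, Complex.ofReal_im, Complex.one_re, Complex.one_im,
          Complex.I_re, Complex.I_im, Complex.add_im, ← hp, ← hq]
        field_simp
        ring
    have hI : Complex.I = ((1-p)/(1-(p^2+q^2))) • (Complex.I*(1+Z^2))
        + (q/(1-(p^2+q^2))) • (1-Z^2) := by
      rw [Complex.real_smul, Complex.real_smul, Complex.ext_iff]
      constructor <;>
      · simp only [Complex.add_re, Complex.mul_re, Complex.mul_im, Complex.sub_re,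
          Complex.sub_im, Complex.ofReal_re, Complex.ofReal_im, Complex.one_re, Complex.one_im,
          Complex.I_re, Complex.I_im, Complex.add_im, ← hp, ← hq]
        field_simp
        ring
    have eone : J (1:ℂ) = Jmap Z (1:ℂ) := by
      conv_lhs => rw [hone]
      conv_rhs => rw [hone]
      rw [map_add, map_smul, map_smul, map_add, map_smul, map_smul, h1, h2, he1, he2]
    have eI : J Complex.I = Jmap Z Complex.I := by
      conv_lhs => rw [hI]
      conv_rhs => rw [hI]
      rw [map_add, map_smul, map_smul, map_add, map_smul, map_smul, h1, h2, he1, he2]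
    apply LinearMap.ext
    intro w
    have hw : w = w.re • (1:ℂ) + w.im • Complex.I := by
      rw [Complex.real_smul, Complex.real_smul, mul_one]
      exact (Complex.re_add_im w).symm
    conv_lhs => rw [hw]
    conv_rhs => rw [hw]
    rw [map_add, map_smul, map_smul, map_add, map_smul, map_smul, eone, eI]
  constructor
  · exact ⟨Jmap Z, ⟨he1, he2⟩, fun J hJ => key J hJ.1 hJ.2⟩
  · intro J h1 h2
    have hJ := key J h1 h2
    subst hJ
    refine ⟨?_, ?_, ?_⟩
    · intro w
      rw [Jmap_apply, Jmap_apply]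
      have hD' : (starRingEnd ℂ) ((1 : ℂ) - Z^2 * (starRingEnd ℂ Z)^2) ≠ 0 := by
        rw [map_sub, map_one, map_mul, map_pow, map_pow, Complex.conj_conj]
        intro h; apply hD; rw [← h]; ring
      simp only [map_add, map_mul, map_div₀, map_sub, map_one, map_pow, map_neg, map_ofNat,
        Complex.conj_I, Complex.conj_conj] at *
      field_simp
      ring_nf
      try simp only [Complex.I_sq, auxIcube, auxIfour]
      try ring
    · constructor
      · intro h
        have e : Jmap Z 1 + Complex.I * Jmap Z Complex.I
            = 2 * (-2*Complex.I*Z^2 / (1 - Z^2*(starRingEnd ℂ Z)^2)) := by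
          rw [Jmap_apply, Jmap_apply, map_one, Complex.conj_I]
          field_simp
          ring_nf
          try simp only [Complex.I_sq, auxIcube, auxIfour]
          try ring
        rw [h 1, h Complex.I] at e
        have hz2 : Z^2 = 0 := by
          field_simp at e
          linear_combination (1/4) * e + (1 - Z^2*(starRingEnd ℂ Z)^2)/4 * Complex.I_sq
        have : Z = 0 := by
          exact pow_eq_zero_iff (by norm_num) |>.mp hz2
        exact this
      · rintro rfl
        intro w
        rw [Jmap_apply]
        simp
    · intro hZ0 h
      have e : Jmap Z 1 - Complex.I * Jmap Z Complex.I
          = 2 * (-Complex.I * (1 + Z^2 * (starRingEnd ℂ Z)^2) / (1 - Z^2*(starRingEnd ℂ Z)^2)) := by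
        rw [Jmap_apply, Jmap_apply, map_one, Complex.conj_I]
        field_simp
        ring_nf
        try simp only [Complex.I_sq, auxIcube, auxIfour]
        try ring
      rw [h 1, h Complex.I] at e
      have : (2:ℂ) = 0 := by
        field_simp at e
        linear_combination (1/2) * e + (1 - Z^2*(starRingEnd ℂ Z)^2)/2 * Complex.I_sq
      exact two_ne_zero this
end
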